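/- For all real numbers x, y, z one has (x·λ + y·λ̂ + z·P)^{∧4} = 24·(x·y·d·e + z²)²·Ω in Λ⁸(V* ⊕ V); equivalently, the class c₁ = x·λ + y·λ̂ + z·P satisfies c₁⁴/4! = (x·y·(∫_A λ²)/2 + z²)². (This is the fourth-power evaluation on A×Â underlying the computation χ(𝓛) = c₁(𝓛)⁴/4! = (d_v·d_w)² in the proof of Proposition 'split2' in Section 6.) -/
import Mathlib


/-!
Model: `V4 = Fin 4 → ℝ` plays the role of both `V*` (with basis `f 0, …, f 3` the `fⱼ*`)
and `V = H¹(Â)` (with basis `f 0, …, f 3` the `fⱼ`); so `Λ•V* = Λ•V = ExteriorAlgebra ℝ V4`.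
The cohomology of `A×Â` is `Λ•(V* ⊕ V) = ExteriorAlgebra ℝ (V4 × V4)`, with `q₁` (resp. `q₂`)
the algebra map induced by the inclusion of the first (resp. second) summand, i.e. `p₁*`
(resp. `p₂*`).  `Pc` is the first Chern class of the Poincaré bundle,
`lamP d e = d·f₁*∧f₂* + e·f₃*∧f₄*` the polarization and
`lamHat d e = −(d·f₃∧f₄ + e·f₁∧f₂)` its Fourier–Mukai transform.
The pushforward `p₂!` (integration over `A`) and the integration functional `∫_A` are
taken to be any linear maps satisfying their defining properties.
-/

noncomputable section

open ExteriorAlgebra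

abbrev V4 : Type := Fin 4 → ℝ

def f (i : Fin 4) : V4 := Pi.single i 1

/-- the point class `ω = f₁*∧f₂*∧f₃*∧f₄* ∈ Λ⁴V*` -/
def ωA : ExteriorAlgebra ℝ V4 :=
  ι ℝ (f 0) * ι ℝ (f 1) * ι ℝ (f 2) * ι ℝ (f 3)

/-- `p₁* : Λ•V* → Λ•(V* ⊕ V)` -/
def q₁ : ExteriorAlgebra ℝ V4 →ₐ[ℝ] ExteriorAlgebra ℝ (V4 × V4) :=
  ExteriorAlgebra.map (LinearMap.inl ℝ V4 V4)

/-- `p₂* : Λ•V → Λ•(V* ⊕ V)` -/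
def q₂ : ExteriorAlgebra ℝ V4 →ₐ[ℝ] ExteriorAlgebra ℝ (V4 × V4) :=
  ExteriorAlgebra.map (LinearMap.inr ℝ V4 V4)

/-- `P = c₁(𝒫) = Σⱼ fⱼ*∧fⱼ ∈ Λ²(V* ⊕ V)` -/
def Pc : ExteriorAlgebra ℝ (V4 × V4) :=
  ∑ j : Fin 4, q₁ (ι ℝ (f j)) * q₂ (ι ℝ (f j))

/-- the polarization `λ = d·f₁*∧f₂* + e·f₃*∧f₄* ∈ Λ²V*` -/
def lamP (d e : ℝ) : ExteriorAlgebra ℝ V4 :=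
  d • (ι ℝ (f 0) * ι ℝ (f 1)) + e • (ι ℝ (f 2) * ι ℝ (f 3))

/-- its Fourier–Mukai transform `λ̂ = −(d·f₃∧f₄ + e·f₁∧f₂) ∈ Λ²V` -/
def lamHat (d e : ℝ) : ExteriorAlgebra ℝ V4 :=
  -(d • (ι ℝ (f 2) * ι ℝ (f 3)) + e • (ι ℝ (f 0) * ι ℝ (f 1)))

/-- the contraction `V* → V`, `ξ ↦ ι_ξ λ̂` (in coordinates, for
`λ̂ = −(d·f₃∧f₄ + e·f₁∧f₂)`): `ι_ξ λ̂ = e·x₂f₁ − e·x₁f₂ + d·x₄f₃ − d·x₃f₄` for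
`ξ = Σ xⱼ fⱼ*`. -/
def contrHat (d e : ℝ) : V4 →ₗ[ℝ] V4 :=
  Matrix.toLin' !![0, e, 0, 0; -e, 0, 0, 0; 0, 0, 0, d; 0, 0, -d, 0]

/-- `f* : Λ•V* → Λ•(V* ⊕ V)`, the algebra map induced by `ξ ↦ (ξ, ι_ξ λ̂)`,
modeling the pullback under `f = m∘(1×Φ_Λ̂) : A×Â → A`. -/
def fPull (d e : ℝ) : ExteriorAlgebra ℝ V4 →ₐ[ℝ] ExteriorAlgebra ℝ (V4 × V4) :=
  ExteriorAlgebra.map (LinearMap.inl ℝ V4 V4 + (LinearMap.inr ℝ V4 V4).comp (contrHat d e))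

/-- the fundamental class `Ω = f₁*∧f₁∧f₂*∧f₂∧f₃*∧f₃∧f₄*∧f₄` of `A×Â` -/
def Ωc : ExteriorAlgebra ℝ (V4 × V4) :=
  q₁ (ι ℝ (f 0)) * q₂ (ι ℝ (f 0)) * (q₁ (ι ℝ (f 1)) * q₂ (ι ℝ (f 1))) *
    (q₁ (ι ℝ (f 2)) * q₂ (ι ℝ (f 2))) * (q₁ (ι ℝ (f 3)) * q₂ (ι ℝ (f 3)))


/-! Auxiliary machinery for `stmt12`: generators `Av i = fᵢ*`, `Bv i = fᵢ` of
`Λ•(V* ⊕ V)` together with anticommutation/square-zero simp lemmas that bubble-sort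
monomials into the normal order `A0 A1 A2 A3 B0 B1 B2 B3`. -/

def Av (i : Fin 4) : ExteriorAlgebra ℝ (V4 × V4) := ι ℝ ((f i, 0) : V4 × V4)
def Bv (i : Fin 4) : ExteriorAlgebra ℝ (V4 × V4) := ι ℝ ((0, f i) : V4 × V4)

lemma anti (v w : V4 × V4) : ι ℝ v * ι ℝ w = -(ι ℝ w * ι ℝ v) := by
  rw [eq_neg_iff_add_eq_zero]; exact ι_add_mul_swap v w

lemma AA {i j : Fin 4} (_ : j < i) : Av i * Av j = -(Av j * Av i) := anti _ _
lemma AA' {i j : Fin 4} (_ : j < i) (x : ExteriorAlgebra ℝ (V4 × V4)) :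
    Av i * (Av j * x) = -(Av j * (Av i * x)) := by
  rw [← mul_assoc, AA ‹_›, neg_mul, mul_assoc]
lemma BB {i j : Fin 4} (_ : j < i) : Bv i * Bv j = -(Bv j * Bv i) := anti _ _
lemma BB' {i j : Fin 4} (_ : j < i) (x : ExteriorAlgebra ℝ (V4 × V4)) :
    Bv i * (Bv j * x) = -(Bv j * (Bv i * x)) := by
  rw [← mul_assoc, BB ‹_›, neg_mul, mul_assoc]
lemma BA (i j : Fin 4) : Bv i * Av j = -(Av j * Bv i) := anti _ _
lemma BA' (i j : Fin 4) (x : ExteriorAlgebra ℝ (V4 × V4)) :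
    Bv i * (Av j * x) = -(Av j * (Bv i * x)) := by
  rw [← mul_assoc, BA, neg_mul, mul_assoc]
lemma Asq (i : Fin 4) : Av i * Av i = 0 := ι_sq_zero _
lemma Asq' (i : Fin 4) (x : ExteriorAlgebra ℝ (V4 × V4)) : Av i * (Av i * x) = 0 := by
  rw [← mul_assoc, Asq, zero_mul]
lemma Bsq (i : Fin 4) : Bv i * Bv i = 0 := ι_sq_zero _
lemma Bsq' (i : Fin 4) (x : ExteriorAlgebra ℝ (V4 × V4)) : Bv i * (Bv i * x) = 0 := by
  rw [← mul_assoc, Bsq, zero_mul]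

lemma hq1 (i : Fin 4) : q₁ (ι ℝ (f i)) = Av i := by
  rw [q₁, ExteriorAlgebra.map_apply_ι]; rfl
lemma hq2 (i : Fin 4) : q₂ (ι ℝ (f i)) = Bv i := by
  rw [q₂, ExteriorAlgebra.map_apply_ι]; rfl

set_option maxHeartbeats 4000000 in
/-- `(x·λ + y·λ̂ + z·P)^∧4 = 24·(xyde + z²)²·Ω` in `Λ⁸(V* ⊕ V)`. -/
theorem stmt12 (d e x y z : ℝ) :
    (x • q₁ (lamP d e) + y • q₂ (lamHat d e) + z • Pc) ^ 4 =
      (24 * (x * y * d * e + z ^ 2) ^ 2) • Ωc := by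
  rw [lamP, lamHat, Pc, Ωc]
  simp only [map_add, map_smul, map_mul, map_neg, hq1, hq2, Fin.sum_univ_four]
  simp only [pow_succ, pow_zero, one_mul]
  simp (config := { decide := true }) only [mul_add, add_mul, smul_mul_assoc, mul_smul_comm,
    smul_smul, smul_add, neg_mul, mul_neg, smul_neg, neg_neg, neg_add_rev, mul_assoc,
    AA, AA', BB, BB', BA, BA', Asq, Asq', Bsq, Bsq', mul_zero, zero_mul, smul_zero,
    add_zero, zero_add, neg_smul]
  module
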